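/- Let a, d be complex numbers, let α = (α_i)_{i≥0} be the arithmetical sequence with α_i = a + i·d, and let β = (β_i)_{i≥0} be any sequence with β_0 = a. Define D(n) = det(P_{α,β}(n)) for n ≥ 1 and D(0) = 1. Then for every n ≥ 1, D(n) = Σ_{k=0}^{n-1} (-d)^k · β̂_k · D(n-k-1), where β̂ is the binomial inverse transform of β. -/

import Mathlib

open Matrix

/-- Entry `P_{i,j}` of the generalized Pascal triangle associated to sequences `α`, `β`:
`P_{i,0} = α i`, `P_{0,j} = β j`, and `P_{i,j} = P_{i-1,j} + P_{i,j-1}` for `i, j ≥ 1`. -/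
def pascalEntry {R : Type*} [CommRing R] (α β : ℕ → R) : ℕ → ℕ → R
  | i, 0 => α i
  | 0, j + 1 => β (j + 1)
  | i + 1, j + 1 => pascalEntry α β i (j + 1) + pascalEntry α β (i + 1) j

/-- The generalized Pascal triangle `P_{α,β}(n)`. -/
def genPascal {R : Type*} [CommRing R] (α β : ℕ → R) (n : ℕ) :
    Matrix (Fin n) (Fin n) R :=
  Matrix.of fun i j => pascalEntry α β (i : ℕ) (j : ℕ)

/-- The Töplitz matrix `T_{α,β}(n)`: `t_{i,j} = α_{i-j}` if `i ≥ j`, else `β_{j-i}`. -/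
def toeplitz {R : Type*} [CommRing R] (α β : ℕ → R) (n : ℕ) :
    Matrix (Fin n) (Fin n) R :=
  Matrix.of fun i j => if (j : ℕ) ≤ (i : ℕ) then α ((i : ℕ) - (j : ℕ)) else β ((j : ℕ) - (i : ℕ))

/-- The unipotent lower triangular matrix `L(n)` with `L_{i,j} = C(i,j)` for `i ≥ j`. -/
def lowerL (R : Type*) [CommRing R] (n : ℕ) : Matrix (Fin n) (Fin n) R :=
  Matrix.of fun i j => if (j : ℕ) ≤ (i : ℕ) then ((i : ℕ).choose (j : ℕ) : R) else 0

/-- The binomial inverse transform `α̂_i = ∑_{k=0}^{i} (-1)^{i+k} C(i,k) α_k`. -/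
def hatSeq {R : Type*} [CommRing R] (α : ℕ → R) (i : ℕ) : R :=
  ∑ k ∈ Finset.range (i + 1), (-1 : R) ^ (i + k) * (i.choose k : R) * α k

/-- The binomial transform `α̌_i = ∑_{k=0}^{i} C(i,k) α_k`. -/
def checkSeq {R : Type*} [CommRing R] (α : ℕ → R) (i : ℕ) : R :=
  ∑ k ∈ Finset.range (i + 1), (i.choose k : R) * α k

/-!
Let `T = T_{α̂,β̂}(n)`. The double binomial transform `∑ C(i,k) C(j,l) T_{k,l}` satisfies Pascal's
recurrence, because the Toeplitz kernel is invariant under shifting both indices, and it has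
boundary values `α` and `β`. Hence `P_{α,β}(n) = L T Lᵀ` with `L = (C(i,j))` unipotent, and
`D(n) = det T`. For arithmetical `α` we get `α̂ = (a, d, 0, 0, …)`, so `T` is upper Hessenberg
with subdiagonal `d`. Expanding `det T` along its first row, the minor of the `k`-th entry is
block upper triangular, with an upper triangular `k × k` block of diagonal `d` and the block
`T_{α̂,β̂}(n - k - 1)`.
-/

open Finset fwdDiff

theorem Fin.val_succAbove {n : ℕ} (j : Fin (n + 1)) (x : Fin n) :
    (j.succAbove x : ℕ) = if (x : ℕ) < j then (x : ℕ) else (x : ℕ) + 1 := by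
  unfold Fin.succAbove
  split_ifs <;> simp_all [Fin.lt_def]

def toeplitzEntry {R : Type*} (u v : ℕ → R) (r c : ℕ) : R :=
  if c ≤ r then u (r - c) else v (c - r)

section ToeplitzEntry

variable {R : Type*} (u v : ℕ → R)

theorem toeplitz_apply [CommRing R] {N : ℕ} (r c : Fin N) :
    toeplitz u v N r c = toeplitzEntry u v r c := rfl

theorem toeplitzEntry_add_add (r c k : ℕ) :
    toeplitzEntry u v (r + k) (c + k) = toeplitzEntry u v r c := by
  simp [toeplitzEntry, Nat.add_sub_add_right]

theorem toeplitzEntry_succ_self (r : ℕ) : toeplitzEntry u v (r + 1) r = u 1 := by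
  simp [toeplitzEntry]

variable {u v} in
theorem toeplitzEntry_zero_left (h0 : u 0 = v 0) (c : ℕ) : toeplitzEntry u v 0 c = v c := by
  rcases c with _ | c <;> simp [toeplitzEntry, h0]

variable {u} in
theorem toeplitzEntry_eq_zero [Zero R] (hu : ∀ k, u (k + 2) = 0) {r c : ℕ} (h : c + 2 ≤ r) :
    toeplitzEntry u v r c = 0 := by
  obtain ⟨k, rfl⟩ := Nat.exists_eq_add_of_le h
  rw [toeplitzEntry, if_pos (by omega), show c + 2 + k - c = k + 2 by omega, hu]

end ToeplitzEntry

section BinomialTransform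

variable {R : Type*} [CommRing R]

theorem hatSeq_eq_fwdDiff_iter (γ : ℕ → R) (k : ℕ) : hatSeq γ k = (Δ_[1])^[k] γ 0 := by
  rw [hatSeq, fwdDiff_iter_eq_sum_shift]
  refine sum_congr rfl fun l hl => ?_
  obtain ⟨m, rfl⟩ := Nat.exists_eq_add_of_le (Nat.lt_succ_iff.mp (mem_range.mp hl))
  simp only [Nat.add_sub_cancel_left, zsmul_eq_mul, zero_add, nsmul_one]
  push_cast
  rw [add_right_comm, pow_add, ← two_mul, pow_mul, neg_one_sq, one_pow, one_mul]

theorem hatSeq_zero (γ : ℕ → R) : hatSeq γ 0 = γ 0 := by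
  simp [hatSeq]

theorem checkSeq_hatSeq (γ : ℕ → R) (i : ℕ) : checkSeq (hatSeq γ) i = γ i := by
  simpa [checkSeq, hatSeq_eq_fwdDiff_iter, nsmul_eq_mul] using
    (shift_eq_sum_fwdDiff_iter 1 γ i 0).symm

theorem checkSeq_zero (f : ℕ → R) : checkSeq f 0 = f 0 := by
  simp [checkSeq]

theorem checkSeq_add (f g : ℕ → R) (i : ℕ) :
    checkSeq (f + g) i = checkSeq f i + checkSeq g i := by
  simp [checkSeq, mul_add, sum_add_distrib]

theorem checkSeq_succ (f : ℕ → R) (i : ℕ) :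
    checkSeq f (i + 1) = checkSeq f i + checkSeq (fun k => f (k + 1)) i :=
  sum_choose_succ_mul (fun k _ => f k) i

theorem fwdDiff_arith (a d : R) : Δ_[1] (fun i : ℕ => a + i * d) = fun _ => d := by
  ext i
  simp only [fwdDiff]
  push_cast
  ring

theorem hatSeq_arith_zero (a d : R) : hatSeq (fun i : ℕ => a + i * d) 0 = a := by
  simp [hatSeq_zero]

theorem hatSeq_arith_one (a d : R) : hatSeq (fun i : ℕ => a + i * d) 1 = d := by
  simp [hatSeq_eq_fwdDiff_iter, fwdDiff_arith]

theorem hatSeq_arith_add_two (a d : R) (k : ℕ) :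
    hatSeq (fun i : ℕ => a + i * d) (k + 2) = 0 := by
  rw [hatSeq_eq_fwdDiff_iter, Function.iterate_add_apply, Function.iterate_succ_apply,
    Function.iterate_one, fwdDiff_arith, fwdDiff_const]
  exact congrFun (Function.iterate_fixed (fwdDiff_const 1 (0 : R)) k) 0

end BinomialTransform

section Pascal

variable {R : Type*} [CommRing R]

theorem pascalEntry_eq_of_rec {α β : ℕ → R} {Q : ℕ → ℕ → R} (hcol : ∀ i, Q i 0 = α i)
    (hrow : ∀ j, Q 0 (j + 1) = β (j + 1))
    (hstep : ∀ i j, Q (i + 1) (j + 1) = Q i (j + 1) + Q (i + 1) j) (i j : ℕ) :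
    pascalEntry α β i j = Q i j := by
  induction i, j using pascalEntry.induct with
  | case1 i => rw [pascalEntry, hcol]
  | case2 j => rw [pascalEntry, hrow]
  | case3 i j ih₁ ih₂ => rw [pascalEntry, ih₁, ih₂, hstep]

theorem checkSeq_checkSeq_step {τ : ℕ → ℕ → R} (hτ : ∀ k l, τ (k + 1) (l + 1) = τ k l)
    (i j : ℕ) :
    checkSeq (fun k => checkSeq (τ k) (j + 1)) (i + 1) =
      checkSeq (fun k => checkSeq (τ k) (j + 1)) i +
        checkSeq (fun k => checkSeq (τ k) j) (i + 1) := by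
  have hshift : (fun k => checkSeq (τ (k + 1)) (j + 1)) =
      (fun k => checkSeq (τ (k + 1)) j) + fun k => checkSeq (τ k) j := by
    ext k
    simp only [checkSeq_succ (τ (k + 1)) j, hτ, Pi.add_apply]
  rw [checkSeq_succ, checkSeq_succ _ i, hshift, checkSeq_add]
  ring

theorem sum_lowerL_mul {n : ℕ} (i : Fin n) (x : ℕ → R) :
    ∑ k : Fin n, lowerL R n i k * x k = checkSeq x i := by
  have hL (k : Fin n) : lowerL R n i k = ((i : ℕ).choose k : R) := by
    rw [lowerL, of_apply, ite_eq_left_iff]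
    exact fun hk => by rw [Nat.choose_eq_zero_of_lt (not_le.mp hk), Nat.cast_zero]
  simp only [hL, checkSeq]
  rw [Fin.sum_univ_eq_sum_range (fun k => ((i : ℕ).choose k : R) * x k)]
  refine (sum_subset (range_subset_range.mpr i.isLt) fun k _ hk => ?_).symm
  rw [Nat.choose_eq_zero_of_lt (by simpa using hk), Nat.cast_zero, zero_mul]

theorem genPascal_eq_lowerL_mul_toeplitz_mul_transpose {α β : ℕ → R} (hβ : β 0 = α 0) (n : ℕ) :
    genPascal α β n = lowerL R n * toeplitz (hatSeq α) (hatSeq β) n * (lowerL R n)ᵀ := by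
  set τ := toeplitzEntry (hatSeq α) (hatSeq β)
  have hτ₀ : τ 0 = hatSeq β :=
    funext <| toeplitzEntry_zero_left (by rw [hatSeq_zero, hatSeq_zero, hβ])
  have hcol (i : ℕ) : checkSeq (fun k => checkSeq (τ k) 0) i = α i := by
    simp [checkSeq_zero, τ, toeplitzEntry, checkSeq_hatSeq]
  have hrow (j : ℕ) : checkSeq (fun k => checkSeq (τ k) (j + 1)) 0 = β (j + 1) := by
    rw [checkSeq_zero, hτ₀, checkSeq_hatSeq]
  have hstep := checkSeq_checkSeq_step fun k l => toeplitzEntry_add_add (hatSeq α) (hatSeq β) k l 1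
  ext i j
  rw [genPascal, of_apply,
    pascalEntry_eq_of_rec (Q := fun i j => checkSeq (fun k => checkSeq (τ k) j) i) hcol hrow hstep,
    Matrix.mul_assoc, mul_apply, ← sum_lowerL_mul i]
  refine sum_congr rfl fun k _ => ?_
  simp only [mul_apply, transpose_apply, mul_comm _ (lowerL R n j _), ← sum_lowerL_mul j (τ k)]
  rfl

theorem det_lowerL (n : ℕ) : (lowerL R n).det = 1 := by
  have hL : (lowerL R n).IsLowerTriangular := fun i j (hij : i < j) => if_neg (not_le.mpr hij)
  rw [det_of_isLowerTriangular _ hL]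
  exact prod_eq_one fun i _ => by simp [lowerL]

theorem det_genPascal_eq_det_toeplitz {α β : ℕ → R} (hβ : β 0 = α 0) (n : ℕ) :
    (genPascal α β n).det = (toeplitz (hatSeq α) (hatSeq β) n).det := by
  rw [genPascal_eq_lowerL_mul_toeplitz_mul_transpose hβ, det_mul, det_mul, det_transpose,
    det_lowerL, one_mul, mul_one]

end Pascal

section Toeplitz

variable {R : Type*} [CommRing R] {u : ℕ → R} (v : ℕ → R)

theorem det_toeplitz_submatrix_succ_succAbove (hu : ∀ k, u (k + 2) = 0) {n : ℕ}
    (j : Fin (n + 1)) :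
    ((toeplitz u v (n + 1)).submatrix Fin.succ j.succAbove).det =
      u 1 ^ (j : ℕ) * (toeplitz u v (n - j)).det := by
  set m : ℕ := (j : ℕ)
  let e : Fin m ⊕ Fin (n - m) ≃ Fin n := finSumFinEquiv.trans (finCongr (by omega))
  set M := ((toeplitz u v (n + 1)).submatrix Fin.succ j.succAbove).submatrix e e
  have hl (p : Fin m) : (e (.inl p) : ℕ) = p := rfl
  have hr (p : Fin (n - m)) : (e (.inr p) : ℕ) = m + p := rfl
  have hMe (x y) : M x y = toeplitzEntry u v (e x + 1) (j.succAbove (e y)) := rfl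
  have hM : M = fromBlocks M.toBlocks₁₁ M.toBlocks₁₂ 0 (toeplitz u v (n - m)) := by
    refine (fromBlocks_toBlocks M).symm.trans ?_
    congr 1 <;> ext p q
    · rw [toBlocks₂₁, of_apply, hMe, Fin.val_succAbove, hl, hr, if_pos q.isLt, Matrix.zero_apply]
      exact toeplitzEntry_eq_zero v hu (by omega)
    · rw [toBlocks₂₂, of_apply, hMe, Fin.val_succAbove, hr, hr, if_neg (by omega), toeplitz_apply,
        show m + p + 1 = p + (m + 1) by omega, show m + q + 1 = q + (m + 1) by omega,
        toeplitzEntry_add_add]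
  have htri : M.toBlocks₁₁.IsUpperTriangular := by
    intro p q (hqp : q < p)
    rw [toBlocks₁₁, of_apply, hMe, Fin.val_succAbove, hl, hl, if_pos q.isLt]
    exact toeplitzEntry_eq_zero v hu (by omega)
  rw [← det_submatrix_equiv_self e]
  change M.det = _
  rw [hM, det_fromBlocks_zero₂₁, det_of_isUpperTriangular htri]
  have hdiag (p : Fin m) : M.toBlocks₁₁ p p = u 1 := by
    rw [toBlocks₁₁, of_apply, hMe, Fin.val_succAbove, hl, if_pos p.isLt, toeplitzEntry_succ_self]
  simp [hdiag, m]

variable {v} in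
theorem det_toeplitz_succ (hu : ∀ k, u (k + 2) = 0) (h0 : u 0 = v 0) (n : ℕ) :
    (toeplitz u v (n + 1)).det =
      ∑ k ∈ range (n + 1), (-u 1) ^ k * v k * (toeplitz u v (n - k)).det := by
  rw [det_succ_row_zero, ← Fin.sum_univ_eq_sum_range]
  refine sum_congr rfl fun j _ => ?_
  rw [toeplitz_apply, Fin.val_zero, toeplitzEntry_zero_left h0,
    det_toeplitz_submatrix_succ_succAbove v hu, neg_pow]
  ring

end Toeplitz

/-- for the arithmetical sequence `α_i = a + i d` and any `β` with `β_0 = a`,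
the determinants `D(n) = det(P_{α,β}(n))`, `D(0) = 1`, satisfy
`D(n) = ∑_{k=0}^{n-1} (-d)^k β̂_k D(n-k-1)`. -/
theorem det_genPascal_arithmetical_rec (a d : ℂ) (β : ℕ → ℂ) (hβ : β 0 = a)
    (D : ℕ → ℂ) (hD0 : D 0 = 1)
    (hD : ∀ m : ℕ, 0 < m → D m = (genPascal (fun i => a + (i : ℂ) * d) β m).det)
    (n : ℕ) (hn : 1 ≤ n) :
    D n = ∑ k ∈ Finset.range n, (-d) ^ k * hatSeq β k * D (n - k - 1) := by
  obtain ⟨m, rfl⟩ : ∃ m, n = m + 1 := ⟨n - 1, by omega⟩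
  have hD' (k : ℕ) : D k = (toeplitz (hatSeq fun i : ℕ => a + i * d) (hatSeq β) k).det := by
    rcases k with _ | k
    · rw [hD0, det_isEmpty]
    · rw [hD _ k.succ_pos, det_genPascal_eq_det_toeplitz (by simp [hβ])]
  have h0 : hatSeq (fun i : ℕ => a + i * d) 0 = hatSeq β 0 := by
    rw [hatSeq_arith_zero, hatSeq_zero, hβ]
  rw [hD', det_toeplitz_succ (hatSeq_arith_add_two a d) h0, hatSeq_arith_one]
  refine sum_congr rfl fun k _ => ?_
  rw [hD', show m + 1 - k - 1 = m - k by omega]
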